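/- arXiv:math/9905156 — 3 statements merged into one kernel-verified Lean document; each statement's English description precedes it below -/
import Mathlib

section
/- Let p be an odd prime with p ≤ 2r + 1, k an integer generating (ℤ/p²ℤ)*, and r ≥ s ≥ 1 integers. Then ν_p(∏_{i=s}^{r} (k^(2i) - 1)) = ⌊2r/(p-1)⌋ + Σ_{i=1}^{⌊2r/(p-1)⌋} ν_p(i) - ⌊2(s-1)/(p-1)⌋ - Σ_{i=1}^{⌊2(s-1)/(p-1)⌋} ν_p(i). -/
/-!
Write `p - 1 = 2d`. Since `k` has order `p (p - 1)` modulo `p²`, `p ∣ k ^ n - 1` forces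
`p (p - 1) ∣ n p`, i.e. `p - 1 ∣ n`; so only the factors with `d ∣ i` contribute. For those,
`k ^ (p - 1) - 1` has valuation exactly `1` (Fermat, and `k ^ (p - 1) ≢ 1 mod p²`), and
lifting the exponent gives `ν_p (k ^ ((p - 1) m) - 1) = 1 + ν_p m`. Summing over `m` with
`(s - 1) / d < m ≤ r / d` gives the formula.
-/

open Finset

theorem padicValInt_prod {p : ℕ} [Fact p.Prime] {ι : Type*} {s : Finset ι} {f : ι → ℤ}
    (hf : ∀ i ∈ s, f i ≠ 0) :
    padicValInt p (∏ i ∈ s, f i) = ∑ i ∈ s, padicValInt p (f i) := by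
  classical
  induction s using Finset.induction_on with
  | empty => simp [padicValInt.one]
  | insert a s ha ih =>
    have hs : ∀ i ∈ s, f i ≠ 0 := fun i hi => hf i (mem_insert_of_mem hi)
    rw [prod_insert ha, sum_insert ha,
      padicValInt.mul (hf a (mem_insert_self a s)) (prod_ne_zero_iff.mpr hs), ih hs]

theorem padicValInt_eq_emultiplicity {p : ℕ} [Fact p.Prime] {z : ℤ} (hz : z ≠ 0) :
    (padicValInt p z : ℕ∞) = emultiplicity (p : ℤ) z := by
  rw [← Int.emultiplicity_natAbs, ← padicValNat_eq_emultiplicity (Int.natAbs_ne_zero.mpr hz)]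
  rfl

theorem padicValInt_pow_sub_one {p : ℕ} [hp : Fact p.Prime] (hodd : Odd p) {x : ℤ}
    (hx : x ≠ 1) (hdvd : (p : ℤ) ∣ x - 1) {n : ℕ} (hn : n ≠ 0) :
    padicValInt p (x ^ n - 1) = padicValInt p (x - 1) + padicValNat p n := by
  have hpx : ¬(p : ℤ) ∣ x := fun h =>
    (Nat.prime_iff_prime_int.mp hp.out).not_dvd_one (by simpa using dvd_sub h hdvd)
  have lte := Int.emultiplicity_pow_sub_pow hp.out hodd hdvd hpx n
  rw [one_pow, ← padicValInt_eq_emultiplicity (sub_ne_zero.mpr hx),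
    ← padicValNat_eq_emultiplicity hn] at lte
  have hne : x ^ n - 1 ≠ 0 := by
    intro h
    rw [h, emultiplicity_zero] at lte
    exact ENat.natCast_ne_top _ (by exact_mod_cast lte.symm)
  rw [← padicValInt_eq_emultiplicity hne] at lte
  exact_mod_cast lte

theorem Finset.sum_Ioc_eq_sum_Ioc_div {M : Type*} [AddCommMonoid M] {d : ℕ} (hd : 0 < d)
    (a b : ℕ) {f : ℕ → M} (hf : ∀ i, ¬d ∣ i → f i = 0) :
    ∑ i ∈ Ioc a b, f i = ∑ m ∈ Ioc (a / d) (b / d), f (d * m) := by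
  have hmem : ∀ m, d * m ∈ Ioc a b ↔ m ∈ Ioc (a / d) (b / d) := by
    intro m
    rw [mem_Ioc, mem_Ioc, Nat.div_lt_iff_lt_mul hd, Nat.le_div_iff_mul_le hd, mul_comm m d]
  rw [← sum_image fun x _ y _ h => Nat.eq_of_mul_eq_mul_left hd h]
  refine (sum_subset (fun i hi => ?_) fun i hi hni => hf i fun ⟨m, hm⟩ => hni ?_).symm
  · obtain ⟨m, hm, rfl⟩ := mem_image.mp hi
    exact (hmem m).mpr hm
  · subst hm
    exact mem_image_of_mem _ ((hmem m).mp hi)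

theorem ZMod.orderOf_intCast_dvd_iff {m n : ℕ} {k : ℤ} :
    orderOf (k : ZMod m) ∣ n ↔ (m : ℤ) ∣ k ^ n - 1 := by
  rw [orderOf_dvd_iff_pow_eq_one, ← ZMod.intCast_zmod_eq_zero_iff_dvd, Int.cast_sub,
    Int.cast_pow, Int.cast_one, sub_eq_zero]

section Generator

variable {p : ℕ} [hp : Fact p.Prime] {k : ℤ}

theorem sub_one_dvd_of_dvd_pow_sub_one (hk : orderOf (k : ZMod (p ^ 2)) = p * (p - 1)) {n : ℕ}
    (h : (p : ℤ) ∣ k ^ n - 1) : p - 1 ∣ n := by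
  have hsq : (p : ℤ) ^ 2 ∣ k ^ (n * p) - 1 := by
    simpa [pow_mul] using dvd_sub_pow_of_dvd_sub h 1
  rw [← Nat.cast_pow, ← ZMod.orderOf_intCast_dvd_iff, hk, mul_comm n] at hsq
  exact Nat.dvd_of_mul_dvd_mul_left hp.out.pos hsq

theorem not_dvd_of_orderOf_eq (hk : orderOf (k : ZMod (p ^ 2)) = p * (p - 1)) :
    ¬(p : ℤ) ∣ k := by
  intro h
  have hsq : (p : ℤ) ^ 2 ∣ k ^ (p * (p - 1)) - 1 := by
    exact_mod_cast ZMod.orderOf_intCast_dvd_iff.mp hk.dvd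
  have hpow : (p : ℤ) ∣ k ^ (p * (p - 1)) :=
    dvd_pow h (Nat.mul_ne_zero hp.out.ne_zero (Nat.sub_ne_zero_of_lt hp.out.one_lt))
  exact (Nat.prime_iff_prime_int.mp hp.out).not_dvd_one
    (by simpa using dvd_sub hpow (dvd_trans (dvd_pow_self _ two_ne_zero) hsq))

theorem padicValInt_pow_sub_one_sub_one (hk : orderOf (k : ZMod (p ^ 2)) = p * (p - 1)) :
    padicValInt p (k ^ (p - 1) - 1) = 1 := by
  have hcop : IsCoprime k p :=
    ((Nat.prime_iff_prime_int.mp hp.out).irreducible.coprime_iff_not_dvd.mpr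
      (not_dvd_of_orderOf_eq hk)).symm
  have hfermat : (p : ℤ) ^ 1 ∣ k ^ (p - 1) - 1 := by
    simpa using (Int.ModEq.pow_card_sub_one_eq_one hp.out hcop).symm.dvd
  have hsq : ¬(p : ℤ) ^ 2 ∣ k ^ (p - 1) - 1 := by
    rw [← Nat.cast_pow, ← ZMod.orderOf_intCast_dvd_iff, hk]
    intro h
    have := Nat.le_of_dvd (Nat.sub_pos_of_lt hp.out.one_lt) h
    have := Nat.mul_le_mul_right (p - 1) hp.out.two_le
    have := hp.out.two_le
    omega
  rcases (padicValInt_dvd_iff 1 _).mp hfermat with h0 | hge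
  · exact absurd (h0 ▸ dvd_zero _) hsq
  · have hlt : ¬2 ≤ padicValInt p (k ^ (p - 1) - 1) := fun h =>
      hsq ((padicValInt_dvd_iff 2 _).mpr (Or.inr h))
    omega

theorem pow_sub_one_ne_zero (hodd : Odd p) (hk : orderOf (k : ZMod (p ^ 2)) = p * (p - 1))
    {n : ℕ} (hn : n ≠ 0) : k ^ n - 1 ≠ 0 := by
  intro h
  rw [sub_eq_zero, pow_eq_one_iff_of_ne_zero hn] at h
  have hsq : k ^ 2 = 1 := by rcases h with rfl | ⟨rfl, -⟩ <;> norm_num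
  have h2 : p * (p - 1) ∣ 2 := hk ▸ ZMod.orderOf_intCast_dvd_iff.mpr (by simp [hsq])
  have := Nat.le_of_dvd two_pos h2
  have := Nat.mul_le_mul_right (p - 1) hp.out.two_le
  have := hp.out.two_le
  have := Nat.odd_iff.mp hodd
  omega

theorem padicValInt_pow_sub_one_of_not_dvd (hk : orderOf (k : ZMod (p ^ 2)) = p * (p - 1))
    {n : ℕ} (hn : ¬p - 1 ∣ n) : padicValInt p (k ^ n - 1) = 0 :=
  padicValInt.eq_zero_of_not_dvd (mt (sub_one_dvd_of_dvd_pow_sub_one hk) hn)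

theorem padicValInt_pow_sub_one_mul_sub_one (hodd : Odd p)
    (hk : orderOf (k : ZMod (p ^ 2)) = p * (p - 1)) {m : ℕ} (hm : m ≠ 0) :
    padicValInt p (k ^ ((p - 1) * m) - 1) = 1 + padicValNat p m := by
  have hval := padicValInt_pow_sub_one_sub_one hk
  have hx : k ^ (p - 1) ≠ 1 := fun h => by simp [h] at hval
  have hdvd : (p : ℤ) ∣ k ^ (p - 1) - 1 := by
    simpa [hval] using padicValInt_dvd (p := p) (k ^ (p - 1) - 1)
  rw [pow_mul, padicValInt_pow_sub_one hodd hx hdvd hm, hval]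

theorem padicValInt_prod_Ioc_pow_two_mul_sub_one (hodd : Odd p)
    (hk : orderOf (k : ZMod (p ^ 2)) = p * (p - 1)) (a b : ℕ) :
    padicValInt p (∏ i ∈ Ioc a b, (k ^ (2 * i) - 1)) =
      ∑ m ∈ Ioc (2 * a / (p - 1)) (2 * b / (p - 1)), (1 + padicValNat p m) := by
  obtain ⟨d, hd⟩ := Nat.Odd.sub_odd hodd odd_one
  have hd0 : 0 < d := by have := hp.out.two_le; omega
  have hdiv : ∀ n, 2 * n / (p - 1) = n / d := fun n => by
    rw [hd, ← two_mul, Nat.mul_div_mul_left _ _ two_pos]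
  rw [padicValInt_prod fun i hi =>
      pow_sub_one_ne_zero hodd hk (mul_ne_zero two_ne_zero (Nat.ne_zero_of_lt (mem_Ioc.mp hi).1)),
    hdiv, hdiv, sum_Ioc_eq_sum_Ioc_div hd0 a b]
  · refine sum_congr rfl fun m hm => ?_
    rw [show 2 * (d * m) = (p - 1) * m by rw [hd]; ring,
      padicValInt_pow_sub_one_mul_sub_one hodd hk (Nat.ne_zero_of_lt (mem_Ioc.mp hm).1)]
  · intro i hi
    refine padicValInt_pow_sub_one_of_not_dvd hk fun h => hi ?_
    rw [hd, ← two_mul] at h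
    exact Nat.dvd_of_mul_dvd_mul_left two_pos h

end Generator

theorem stmt_5_general (p : ℕ) (hp : p.Prime) (hodd : Odd p) (k : ℤ)
    (hk : orderOf (k : ZMod (p ^ 2)) = p * (p - 1)) (r s : ℕ) (hs : 1 ≤ s)
    (hsr : s ≤ r) :
    (padicValInt p (∏ i ∈ Finset.Icc s r, (k ^ (2 * i) - 1)) : ℤ) =
      (2 * r / (p - 1) : ℕ) + ∑ i ∈ Finset.Icc 1 (2 * r / (p - 1)), (padicValNat p i : ℤ)
        - (2 * (s - 1) / (p - 1) : ℕ)
        - ∑ i ∈ Finset.Icc 1 (2 * (s - 1) / (p - 1)), (padicValNat p i : ℤ) := by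
  have := Fact.mk hp
  have hIcc : Icc s r = Ioc (s - 1) r := by
    rw [← Finset.Icc_add_one_left_eq_Ioc, Nat.sub_add_cancel hs]
  have hab : 2 * (s - 1) / (p - 1) ≤ 2 * r / (p - 1) := Nat.div_le_div_right (by omega)
  rw [hIcc, padicValInt_prod_Ioc_pow_two_mul_sub_one hodd hk]
  have hIcc_one : ∀ n : ℕ, Icc 1 n = Ioc 0 n := fun n => Icc_add_one_left_eq_Ioc 0 n
  rw [hIcc_one, hIcc_one, ← sum_Ioc_consecutive _ (Nat.zero_le _) hab]
  simp only [Nat.cast_sum, Nat.cast_add, Nat.cast_one]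
  rw [sum_add_distrib, sum_const, Nat.card_Ioc, nsmul_one, Nat.cast_sub hab]
  ring

theorem stmt_5 (p : ℕ) (hp : p.Prime) (hodd : Odd p) (k : ℤ)
    (hk : orderOf (k : ZMod (p ^ 2)) = p * (p - 1)) (r s : ℕ) (hs : 1 ≤ s)
    (hsr : s ≤ r) (hsmall : p ≤ 2 * r + 1) :
    (padicValInt p (∏ i ∈ Finset.Icc s r, (k ^ (2 * i) - 1)) : ℤ) =
      (2 * r / (p - 1) : ℕ) + ∑ i ∈ Finset.Icc 1 (2 * r / (p - 1)), (padicValNat p i : ℤ)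
        - (2 * (s - 1) / (p - 1) : ℕ)
        - ∑ i ∈ Finset.Icc 1 (2 * (s - 1) / (p - 1)), (padicValNat p i : ℤ) :=
  stmt_5_general p hp hodd k hk r s hs hsr
end

section
/- For positive integers i and r with i < r, if ν₂(2i) ≥ r - i - 1, then ν₂(C(2i, r-i)) = ν₂(2i) - ν₂(r-i), where C(n,k) denotes the binomial coefficient. -/
/-! Write `n = 2i` and `k = r - i`. From `n * C(n-1, k-1) = k * C(n, k)` it suffices that
`C(n-1, k-1)` is odd. Whenever `p ^ v ∣ n` and `0 < j < p ^ v`, the factors `n - j` and `j`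
have the same `p`-adic valuation, so in `C(n-1, m) = ∏_{1 ≤ j ≤ m} (n - j) / j` all powers of `p`
cancel as long as `m < p ^ v`. The hypothesis gives `k - 1 ≤ ν₂(n) < 2 ^ ν₂(n)`. -/

namespace Nat

variable {p n v : ℕ} [Fact p.Prime]

lemma padicValNat_sub_of_lt_pow {a : ℕ} (hn : n ≠ 0) (hv : p ^ v ∣ n) (ha : a ≠ 0)
    (hav : a < p ^ v) : padicValNat p (n - a) = padicValNat p a := by
  have hpv : p ^ v ≤ n := Nat.le_of_dvd (Nat.pos_of_ne_zero hn) hv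
  have hna : n - a ≠ 0 := by omega
  have hdvd_iff {j : ℕ} (hj : j ≤ v) : p ^ j ∣ n - a ↔ p ^ j ∣ a :=
    Nat.dvd_sub_iff_right (by omega) ((pow_dvd_pow p hj).trans hv)
  have hlt : padicValNat p a < v :=
    (Nat.pow_lt_pow_iff_right (Fact.out : p.Prime).one_lt).mp
      ((Nat.le_of_dvd (Nat.pos_of_ne_zero ha) pow_padicValNat_dvd).trans_lt hav)
  apply le_antisymm
  · by_contra! hgt
    exact pow_succ_padicValNat_not_dvd ha
      ((hdvd_iff hlt).mp ((padicValNat_dvd_iff_le hna).mpr hgt))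
  · exact (padicValNat_dvd_iff_le hna).mp ((hdvd_iff hlt.le).mpr pow_padicValNat_dvd)

lemma padicValNat_choose_sub_one_eq_zero (hn : n ≠ 0) (hv : p ^ v ∣ n) :
    ∀ {m : ℕ}, m < p ^ v → padicValNat p ((n - 1).choose m) = 0
  | 0, _ => by simp
  | m + 1, hm => by
    have hpv : p ^ v ≤ n := Nat.le_of_dvd (Nat.pos_of_ne_zero hn) hv
    have hchoose : (n - 1).choose (m + 1) ≠ 0 := (Nat.choose_pos (by omega)).ne'
    have hrec := congrArg (padicValNat p) (Nat.choose_succ_right_eq (n - 1) m)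
    rw [padicValNat.mul hchoose m.add_one_ne_zero,
      padicValNat.mul (Nat.choose_pos (by omega)).ne' (by omega),
      padicValNat_choose_sub_one_eq_zero hn hv (m := m) (by omega),
      show n - 1 - m = n - (m + 1) by omega,
      padicValNat_sub_of_lt_pow hn hv m.add_one_ne_zero hm] at hrec
    omega

lemma padicValNat_choose_add_padicValNat {k : ℕ} (hv : p ^ v ∣ n) (hk : k ≠ 0)
    (hkv : k ≤ p ^ v) (hkn : k ≤ n) :
    padicValNat p (n.choose k) + padicValNat p k = padicValNat p n := by
  have hn : n ≠ 0 := by omega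
  have hid : n * (n - 1).choose (k - 1) = n.choose k * k := by
    simpa [Nat.sub_add_cancel (Nat.one_le_iff_ne_zero.mpr hn),
      Nat.sub_add_cancel (Nat.one_le_iff_ne_zero.mpr hk)] using
      Nat.add_one_mul_choose_eq (n - 1) (k - 1)
  have hval := congrArg (padicValNat p) hid
  rw [padicValNat.mul hn (Nat.choose_pos (by omega)).ne',
    padicValNat.mul (Nat.choose_pos hkn).ne' hk,
    padicValNat_choose_sub_one_eq_zero hn hv (by omega)] at hval
  omega

end Nat

theorem stmt_10_general (i r : ℕ) (hir : i < r) (hle : r - i ≤ 2 * i)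
    (hval : r - i - 1 ≤ padicValNat 2 (2 * i)) :
    (padicValNat 2 ((2 * i).choose (r - i)) : ℤ) =
      (padicValNat 2 (2 * i) : ℤ) - (padicValNat 2 (r - i) : ℤ) := by
  have hk : r - i ≤ 2 ^ padicValNat 2 (2 * i) :=
    (Nat.sub_le_iff_le_add.mp hval).trans (Nat.lt_two_pow_self).succ_le
  have := Nat.padicValNat_choose_add_padicValNat pow_padicValNat_dvd (by omega) hk hle
  omega

theorem stmt_10 (i r : ℕ) (hi : 0 < i) (hir : i < r) (hle : r - i ≤ 2 * i)
    (hval : r - i - 1 ≤ padicValNat 2 (2 * i)) :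
    (padicValNat 2 ((2 * i).choose (r - i)) : ℤ) =
      (padicValNat 2 (2 * i) : ℤ) - (padicValNat 2 (r - i) : ℤ) :=
  stmt_10_general i r hir hle hval
end

section
/- For positive integers i and r with max(⌊(r-1)/3⌋ + 1) ≤ i < r - 1 and r - i ≤ 2i, we have ν₂(C(2i, r-i)) + 2(r - i - 1) > ν₂(2i). -/
/-!
Write `k = r - i`. The absorption identity `n * C(n - 1, k - 1) = C(n, k) * k` shows that
`ν₂(2i) ≤ ν₂(C(2i, k)) + ν₂(k)`, and `ν₂(k) < k ≤ 2(k - 1)` as soon as `k ≥ 2`.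
-/

theorem padicValNat_le_padicValNat_choose_add {p n k : ℕ} [Fact p.Prime] (hk : 0 < k)
    (hkn : k ≤ n) : padicValNat p n ≤ padicValNat p (n.choose k) + padicValNat p k := by
  obtain ⟨m, rfl⟩ : ∃ m, n = m + 1 := ⟨n - 1, by omega⟩
  obtain ⟨j, rfl⟩ : ∃ j, k = j + 1 := ⟨k - 1, by omega⟩
  have hchoose : m.choose j ≠ 0 := (Nat.choose_pos (by omega)).ne'
  have hchoose' : (m + 1).choose (j + 1) ≠ 0 := (Nat.choose_pos hkn).ne'
  have hval : padicValNat p (m + 1) + padicValNat p (m.choose j) =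
      padicValNat p ((m + 1).choose (j + 1)) + padicValNat p (j + 1) := by
    rw [← padicValNat.mul (by omega) hchoose, ← padicValNat.mul hchoose' (by omega),
      Nat.add_one_mul_choose_eq]
  omega

theorem stmt_11_general (i r : ℕ)
    (hhigh : i < r - 1) (hle : r - i ≤ 2 * i) :
    padicValNat 2 ((2 * i).choose (r - i)) + 2 * (r - i - 1) > padicValNat 2 (2 * i) := by
  have hdiv := padicValNat_le_padicValNat_choose_add (p := 2) (by omega : 0 < r - i) hle
  have hsmall : padicValNat 2 (r - i) < r - i := Nat.padicValNat_lt_self (by omega)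
  omega

theorem stmt_11 (i r : ℕ) (hi : 0 < i) (hlow : (r - 1) / 3 + 1 ≤ i)
    (hhigh : i < r - 1) (hle : r - i ≤ 2 * i) :
    padicValNat 2 ((2 * i).choose (r - i)) + 2 * (r - i - 1) > padicValNat 2 (2 * i) :=
  stmt_11_general i r hhigh hle
end
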